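/- arXiv:2508.04089 — 7 statements merged into one kernel-verified Lean document; each statement's English description precedes it below -/
import Mathlib

section
/- For a geometric random variable N with success parameter p ∈ (0,1] (taking values in {1,2,3,...} with P(N=k)=p(1-p)^{k-1}), the n-th moment satisfies E(N^n) ≤ n!/p^n for every n ≥ 1. -/
/-!
Since `(k + 1)^n ≤ (k + 1)(k + 2)⋯(k + n) = n! · C(k + n, n)`, the moment series is dominated
termwise by `n! · p · ∑ₖ C(k + n, n) qᵏ = n! · p / (1 - q)^(n + 1)` with `q = 1 - p`,
which equals `n! / pⁿ`.
-/

open Nat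

lemma Nat.succ_pow_le_factorial_mul_choose (k n : ℕ) : (k + 1) ^ n ≤ n ! * (k + n).choose n :=
  ascFactorial_eq_factorial_mul_choose k n ▸ pow_succ_le_ascFactorial (k + 1) n

lemma tsum_succ_pow_mul_geometric_le {q : ℝ} (hq0 : 0 ≤ q) (hq1 : q < 1) (n : ℕ) :
    ∑' k : ℕ, ((k : ℝ) + 1) ^ n * q ^ k ≤ n ! / (1 - q) ^ (n + 1) := by
  have hbound : HasSum (fun k : ℕ ↦ (n ! : ℝ) * ((k + n).choose n * q ^ k))
      (n ! / (1 - q) ^ (n + 1)) := by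
    rw [div_eq_mul_one_div]
    exact (hasSum_choose_mul_geometric_of_norm_lt_one n (r := q)
      (by rwa [Real.norm_of_nonneg hq0])).mul_left _
  have hle (k : ℕ) : ((k : ℝ) + 1) ^ n * q ^ k ≤ n ! * ((k + n).choose n * q ^ k) := by
    rw [← mul_assoc]
    gcongr
    exact_mod_cast Nat.succ_pow_le_factorial_mul_choose k n
  refine Real.tsum_le_of_sum_le (fun k ↦ by positivity) fun s ↦ ?_
  exact (Finset.sum_le_sum fun k _ ↦ hle k).trans
    (sum_le_hasSum s (fun k _ ↦ by positivity) hbound)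

theorem geometric_moment_le_general (p : ℝ) (hp : 0 < p) (hp1 : p ≤ 1) (n : ℕ) :
    (∑' k : ℕ, ((k + 1 : ℝ)) ^ n * p * (1 - p) ^ k) ≤ (n.factorial : ℝ) / p ^ n := by
  have hmoment := tsum_succ_pow_mul_geometric_le (q := 1 - p) (by linarith) (by linarith) n
  rw [sub_sub_cancel] at hmoment
  calc ∑' k : ℕ, ((k + 1 : ℝ)) ^ n * p * (1 - p) ^ k
      = (∑' k : ℕ, ((k : ℝ) + 1) ^ n * (1 - p) ^ k) * p := by
        rw [← tsum_mul_right]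
        exact tsum_congr fun k ↦ by ring
    _ ≤ n ! / p ^ (n + 1) * p := by gcongr
    _ = n ! / p ^ n := by
        field_simp
        ring

/-- For a geometric random variable `N` on `{1,2,...}` with `P(N=k) = p(1-p)^{k-1}`,
the `n`-th moment satisfies `E(N^n) ≤ n!/p^n`. Here the moment is written as
`∑' k : ℕ, (k+1)^n * p * (1-p)^k`. -/
theorem geometric_moment_le (p : ℝ) (hp : 0 < p) (hp1 : p ≤ 1) (n : ℕ) (hn : 1 ≤ n) :
    (∑' k : ℕ, ((k + 1 : ℝ)) ^ n * p * (1 - p) ^ k) ≤ (n.factorial : ℝ) / p ^ n :=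
  geometric_moment_le_general p hp hp1 n
end

section
/- Carlitz's identity: for every n ≥ 1 and p ∈ (0,1), ∑_{k≥1} k^n p (1-p)^{k-1} = p^{-n} ∑_{q=0}^{n-1} ⟨n over q⟩ (1-p)^q, where ⟨n over q⟩ denotes the Eulerian numbers. -/
/-!
Worpitzky's identity `(k + 1) ^ n = ∑_σ C(k + n - des σ, n)` is proved by stable sorting: a tuple
`f : Fin n → Fin (k + 1)` is the same as its sorting permutation `σ` together with the sorted
values `c = f ∘ σ`, which increase weakly, and strictly across every descent of `σ`. Adding to
`c i` the number of ascents of `σ` before `i` makes `c` strictly increasing with values below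
`k + n - des σ`, i.e. an `n`-subset of `Fin (k + n - des σ)`. Multiplying by `x ^ k` and summing,
`∑_k C(k + n - d, n) x ^ k = x ^ d / (1 - x) ^ (n + 1)` gives
`∑_k (k + 1) ^ n x ^ k = (∑_σ x ^ des σ) / (1 - x) ^ (n + 1)`; take `x = 1 - p`.
-/

/-- The number of descents of a permutation `σ` of `Fin n`:
positions `i` with `i+1 < n` and `σ(i+1) < σ(i)`. -/
def descentCount (n : ℕ) (σ : Equiv.Perm (Fin n)) : ℕ :=
  (Finset.univ.filter
    (fun i : Fin n => ∃ h : (i : ℕ) + 1 < n, σ ⟨(i : ℕ) + 1, h⟩ < σ i)).card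

/-- The Eulerian number `⟨n over q⟩`: the number of permutations of `{1,...,n}`
with exactly `q` descents. -/
def eulerian (n q : ℕ) : ℕ :=
  (Finset.univ.filter (fun σ : Equiv.Perm (Fin n) => descentCount n σ = q)).card

open Finset Equiv

lemma Fin.partialSum_last {M : Type*} [AddCommMonoid M] {m : ℕ} (f : Fin m → M) :
    Fin.partialSum f (Fin.last m) = ∑ i, f i := by
  simp [Fin.partialSum, List.take_of_length_le, List.sum_ofFn]

lemma Fin.partialSum_le_val {m : ℕ} {a : Fin m → ℕ} (ha : ∀ j, a j ≤ 1) (i : Fin (m + 1)) :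
    Fin.partialSum a i ≤ i := by
  induction i using Fin.induction with
  | zero => simp
  | succ i ih =>
    rw [Fin.partialSum_succ, Fin.val_succ]
    exact add_le_add ih (ha i)

lemma Fin.val_le_of_strictMono {n N : ℕ} {g : Fin n → Fin N} (hg : StrictMono g) (i : Fin n) :
    (i : ℕ) ≤ g i := by
  obtain ⟨i, hi⟩ := i
  induction i with
  | zero => exact Nat.zero_le _
  | succ i ih => exact (ih (by omega)).trans_lt (hg (Fin.mk_lt_mk.2 i.lt_succ_self))

def strictMonoAddPartialSumEquiv {m k : ℕ} (a : Fin m → ℕ) (ha : ∀ j, a j ≤ 1) :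
    {c : Fin (m + 1) → Fin (k + 1) // StrictMono fun i => (c i : ℕ) + Fin.partialSum a i} ≃
      (Fin (m + 1) ↪o Fin (k + 1 + ∑ j, a j)) where
  toFun c := OrderEmbedding.ofStrictMono
    (fun i => ⟨c.1 i + Fin.partialSum a i, by
      have hle : (c.1 i : ℕ) + Fin.partialSum a i ≤
          c.1 (Fin.last m) + Fin.partialSum a (Fin.last m) := c.2.monotone (Fin.le_last i)
      have := (c.1 (Fin.last m)).isLt
      rw [Fin.partialSum_last] at hle
      omega⟩)
    fun _ _ h => c.2 h
  invFun g := ⟨fun i => ⟨g i - Fin.partialSum a i, by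
      have hmono : Monotone fun i => (g i : ℕ) - Fin.partialSum a i :=
        Fin.monotone_iff_le_succ.2 fun i => by
          have hg : (g i.castSucc : ℕ) < g i.succ := g.strictMono i.castSucc_lt_succ
          have := ha i
          rw [Fin.partialSum_succ]
          omega
      have hle : (g i : ℕ) - Fin.partialSum a i ≤
          g (Fin.last m) - Fin.partialSum a (Fin.last m) := hmono (Fin.le_last i)
      have := (g (Fin.last m)).isLt
      rw [Fin.partialSum_last] at hle
      omega⟩, fun i j h => by
      have hij : (g i : ℕ) < g j := g.strictMono h
      have := (Fin.partialSum_le_val ha i).trans (Fin.val_le_of_strictMono g.strictMono i)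
      have := (Fin.partialSum_le_val ha j).trans (Fin.val_le_of_strictMono g.strictMono j)
      dsimp only
      omega⟩
  left_inv c := by ext i; simp [OrderEmbedding.ofStrictMono]
  right_inv g := by
    ext i
    have := (Fin.partialSum_le_val ha i).trans (Fin.val_le_of_strictMono g.strictMono i)
    simp only [OrderEmbedding.ofStrictMono, OrderEmbedding.coe_ofMapLEIff]
    omega

lemma card_strictMono_add_partialSum {m k : ℕ} (a : Fin m → ℕ) (ha : ∀ j, a j ≤ 1) :
    Nat.card
        {c : Fin (m + 1) → Fin (k + 1) // StrictMono fun i => (c i : ℕ) + Fin.partialSum a i} =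
      (k + 1 + ∑ j, a j).choose (m + 1) := by
  rw [Nat.card_congr ((strictMonoAddPartialSumEquiv a ha).trans Set.powersetCard.ofFinEmbEquiv),
    Set.powersetCard.card, Nat.card_eq_fintype_card, Fintype.card_fin]

lemma Tuple.eq_sort_iff_lt_succ {α : Type*} [LinearOrder α] {m : ℕ} {f : Fin (m + 1) → α}
    {σ : Perm (Fin (m + 1))} :
    σ = Tuple.sort f ↔ ∀ i : Fin m,
      toLex (f (σ i.castSucc), σ i.castSucc) < toLex (f (σ i.succ), σ i.succ) := by
  rw [Tuple.eq_sort_iff', Fin.strictMono_iff_lt_succ]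
  rfl

section Descents

variable {m : ℕ} (σ : Perm (Fin (m + 1)))

lemma descentCount_succ :
    descentCount (m + 1) σ = #{j : Fin m | σ j.succ < σ j.castSucc} := by
  symm
  refine card_bij (fun j _ => j.castSucc) ?_ (fun _ _ _ _ => Fin.castSucc_inj.1) ?_
  · intro j hj
    simp only [mem_filter, mem_univ, true_and] at hj ⊢
    exact ⟨by simp, hj⟩
  · intro i hi
    simp only [mem_filter, mem_univ, true_and] at hi
    obtain ⟨h, hlt⟩ := hi
    exact ⟨⟨i, by omega⟩, by simpa using hlt, rfl⟩

def ascentIndicator (j : Fin m) : ℕ := if σ j.castSucc < σ j.succ then 1 else 0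

lemma ascentIndicator_le_one (j : Fin m) : ascentIndicator σ j ≤ 1 := by
  unfold ascentIndicator
  split_ifs <;> omega

lemma sum_ascentIndicator_add_descentCount :
    ∑ j, ascentIndicator σ j + descentCount (m + 1) σ = m := by
  have hsplit := card_filter_add_card_filter_not (s := univ)
    (fun j : Fin m => σ j.castSucc < σ j.succ)
  rw [card_univ, Fintype.card_fin] at hsplit
  unfold ascentIndicator
  rw [sum_boole, Nat.cast_id, descentCount_succ]
  convert hsplit using 3
  ext j
  rw [mem_filter_univ, mem_filter_univ, not_lt, le_iff_lt_or_eq,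
    or_iff_left (σ.injective.ne j.castSucc_lt_succ.ne')]

/-- Ties in `f ∘ σ` are sorted by position, so `f ∘ σ` increases strictly across each descent
of `σ`; adding the number of earlier ascents makes the increase strict everywhere. -/
lemma sort_eq_iff_strictMono_add_partialSum_ascentIndicator {k : ℕ}
    {f : Fin (m + 1) → Fin (k + 1)} :
    Tuple.sort f = σ ↔
      StrictMono fun i => (f (σ i) : ℕ) + Fin.partialSum (ascentIndicator σ) i := by
  rw [eq_comm, Tuple.eq_sort_iff_lt_succ, Fin.strictMono_iff_lt_succ]
  refine forall_congr' fun i => ?_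
  simp only [ascentIndicator, Fin.partialSum_succ, Prod.Lex.toLex_lt_toLex, Fin.lt_def,
    Fin.ext_iff]
  split_ifs <;> omega

lemma card_sort_eq (k : ℕ) :
    Nat.card {f : Fin (m + 1) → Fin (k + 1) // Tuple.sort f = σ} =
      (k + (m + 1) - descentCount (m + 1) σ).choose (m + 1) := by
  have hshift : k + 1 + ∑ j, ascentIndicator σ j = k + (m + 1) - descentCount (m + 1) σ := by
    have := sum_ascentIndicator_add_descentCount σ
    omega
  rw [← hshift, ← card_strictMono_add_partialSum _ (ascentIndicator_le_one σ)]
  refine Nat.card_congr (Equiv.subtypeEquiv (σ.symm.arrowCongr (Equiv.refl _)) fun f => ?_)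
  simp [sort_eq_iff_strictMono_add_partialSum_ascentIndicator]

end Descents

lemma descentCount_le (n : ℕ) (σ : Perm (Fin n)) : descentCount n σ ≤ n :=
  (card_filter_le _ _).trans_eq (card_fin n)

lemma descentCount_lt {n : ℕ} (hn : 1 ≤ n) (σ : Perm (Fin n)) : descentCount n σ < n := by
  obtain ⟨m, rfl⟩ := Nat.exists_eq_add_of_le' hn
  rw [descentCount_succ]
  exact Nat.lt_succ_of_le ((card_filter_le _ _).trans_eq (card_fin m))

theorem worpitzky (n k : ℕ) :
    (k + 1) ^ n = ∑ σ : Perm (Fin n), (k + n - descentCount n σ).choose n := by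
  cases n with
  | zero => simp
  | succ m =>
    calc (k + 1) ^ (m + 1) = Nat.card (Fin (m + 1) → Fin (k + 1)) := by simp
      _ = ∑ σ, Nat.card {f : Fin (m + 1) → Fin (k + 1) // Tuple.sort f = σ} := by
        rw [← Nat.card_congr (Equiv.sigmaFiberEquiv Tuple.sort), Nat.card_sigma]
      _ = _ := by simp only [card_sort_eq]

lemma sum_pow_descentCount {R : Type*} [CommSemiring R] {n : ℕ} (hn : 1 ≤ n) (x : R) :
    ∑ σ : Perm (Fin n), x ^ descentCount n σ = ∑ q ∈ range n, (eulerian n q : R) * x ^ q := by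
  rw [← sum_fiberwise_of_maps_to fun σ _ => mem_range.2 (descentCount_lt hn σ)]
  refine sum_congr rfl fun q _ => ?_
  rw [sum_congr rfl fun σ hσ => by rw [(mem_filter.1 hσ).2], sum_const, nsmul_eq_mul, eulerian]

section GeneratingFunction

variable {𝕜 : Type*} [NormedDivisionRing 𝕜]

lemma hasSum_choose_sub_mul_geometric (n : ℕ) {d : ℕ} (hd : d ≤ n) {x : 𝕜} (hx : ‖x‖ < 1) :
    HasSum (fun k : ℕ => ((k + n - d).choose n : 𝕜) * x ^ k)
      (x ^ d * (1 / (1 - x) ^ (n + 1))) := by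
  rw [← hasSum_nat_add_iff' d]
  have hvanish : ∑ k ∈ range d, ((k + n - d).choose n : 𝕜) * x ^ k = 0 :=
    sum_eq_zero fun k hk => by
      rw [Nat.choose_eq_zero_of_lt (by have := mem_range.1 hk; omega), Nat.cast_zero, zero_mul]
  have hshift : (fun k => ((k + d + n - d).choose n : 𝕜) * x ^ (k + d)) =
      fun k => x ^ d * (((k + n).choose n : 𝕜) * x ^ k) := funext fun k => by
    rw [show k + d + n - d = k + n by omega, add_comm k d, pow_add, ← mul_assoc,
      (Nat.cast_commute _ (x ^ d)).eq, mul_assoc]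
  rw [hvanish, sub_zero, hshift]
  exact (hasSum_choose_mul_geometric_of_norm_lt_one n hx).mul_left (x ^ d)

theorem hasSum_pow_mul_geometric_eq_sum_descentCount (n : ℕ) {x : 𝕜} (hx : ‖x‖ < 1) :
    HasSum (fun k : ℕ => ((k : 𝕜) + 1) ^ n * x ^ k)
      ((∑ σ : Perm (Fin n), x ^ descentCount n σ) * (1 / (1 - x) ^ (n + 1))) := by
  rw [sum_mul]
  convert hasSum_sum fun σ _ => hasSum_choose_sub_mul_geometric n (descentCount_le n σ) hx with k
  rw [← sum_mul]
  exact_mod_cast congrArg (fun N : ℕ => (N : 𝕜) * x ^ k) (worpitzky n k)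

end GeneratingFunction

/-- Carlitz's identity: for `n ≥ 1` and `p ∈ (0,1)`,
`∑_{k≥1} k^n p (1-p)^{k-1} = p^{-n} ∑_{q=0}^{n-1} ⟨n over q⟩ (1-p)^q`. -/
theorem carlitz_identity (n : ℕ) (hn : 1 ≤ n) (p : ℝ) (hp : 0 < p) (hp1 : p < 1) :
    (∑' k : ℕ, ((k + 1 : ℝ)) ^ n * p * (1 - p) ^ k) =
      (p ^ n)⁻¹ * ∑ q ∈ Finset.range n, (eulerian n q : ℝ) * (1 - p) ^ q := by
  have hx : ‖1 - p‖ < 1 := by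
    rw [Real.norm_eq_abs, abs_lt]
    constructor <;> linarith
  have hsum := (hasSum_pow_mul_geometric_eq_sum_descentCount n hx).mul_left p
  rw [sum_pow_descentCount hn, sub_sub_cancel] at hsum
  calc ∑' k : ℕ, ((k + 1 : ℝ)) ^ n * p * (1 - p) ^ k
      = ∑' k : ℕ, p * (((k : ℝ) + 1) ^ n * (1 - p) ^ k) := tsum_congr fun k => by ring
    _ = _ := hsum.tsum_eq
    _ = _ := by field_simp; ring
end

section
/- Let (a_n)_{n≥1} be a sequence of positive reals satisfying a_n ≤ a_1 + η ∑_{k=1}^{n-1} C(n,k) a_{n-k} a_k for all n ≥ 2, where η > 0 and C(n,k) denotes binomial coefficients. Then there exists r* > 0 (depending only on a_1 and η) such that a_n ≤ n!/(2 η r*^n) for all n ≥ 2. -/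
lemma basel_aux : ∀ n : ℕ, ∑ k ∈ Finset.Ico 1 (n+1), (1:ℝ)/(k:ℝ)^2 ≤ 2 - 1/(n:ℝ) := by
  intro n
  induction n with
  | zero => simp
  | succ n ih =>
    rw [Finset.sum_Ico_succ_top (by omega)]
    rcases Nat.eq_zero_or_pos n with h | h
    · subst h; norm_num
    · have hn : (1:ℝ) ≤ (n:ℝ) := by exact_mod_cast h
      have key : (1:ℝ)/((n:ℝ)+1)^2 ≤ 1/(n:ℝ) - 1/((n:ℝ)+1) := by
        rw [div_sub_div _ _ (by linarith) (by linarith), div_le_div_iff₀ (by positivity) (by positivity)]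
        ring_nf
        nlinarith
      push_cast
      linarith

lemma basel (n : ℕ) : ∑ k ∈ Finset.Ico 1 n, (1:ℝ)/(k:ℝ)^2 ≤ 2 := by
  rcases n with _ | m
  · simp
  · have := basel_aux m
    have h0 : (0:ℝ) ≤ 1/(m:ℝ) := by positivity
    linarith

lemma basel_reflect (n : ℕ) : ∑ k ∈ Finset.Ico 1 n, (1:ℝ)/((n-k : ℕ):ℝ)^2 ≤ 2 := by
  have : ∑ k ∈ Finset.Ico 1 n, (1:ℝ)/((n-k : ℕ):ℝ)^2 = ∑ k ∈ Finset.Ico 1 n, (1:ℝ)/(k:ℝ)^2 := by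
    apply Finset.sum_nbij' (i := fun k => n - k) (j := fun k => n - k) <;>
      intro k hk <;> simp only [Finset.mem_Ico] at * <;> first | omega | (congr 2; omega)
  rw [this]; exact basel n

lemma sq_le_two_factorial (n : ℕ) (hn : 2 ≤ n) : n^2 ≤ 2 * n.factorial := by
  induction n, hn using Nat.le_induction with
  | base => decide
  | succ n hn ih =>
    rw [Nat.factorial_succ]
    nlinarith

lemma conv_bound (n : ℕ) (hn : 2 ≤ n) :
    ∑ k ∈ Finset.Ico 1 n, (1:ℝ)/((k:ℝ)^2 * ((n-k : ℕ):ℝ)^2) ≤ 8/(n:ℝ)^2 := by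
  have hnp : (0:ℝ) < (n:ℝ) := by positivity
  have step : ∀ k ∈ Finset.Ico 1 n,
      (1:ℝ)/((k:ℝ)^2 * ((n-k : ℕ):ℝ)^2) ≤ 2/(n:ℝ)^2 * (1/(k:ℝ)^2 + 1/((n-k:ℕ):ℝ)^2) := by
    intro k hk
    simp only [Finset.mem_Ico] at hk
    have hx : (1:ℝ) ≤ (k:ℝ) := by exact_mod_cast hk.1
    have hy : (1:ℝ) ≤ ((n-k:ℕ):ℝ) := by
      have : 1 ≤ n - k := by omega
      exact_mod_cast this
    have hxy : (n:ℝ) = (k:ℝ) + ((n-k:ℕ):ℝ) := by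
      have : n = k + (n - k) := by omega
      exact_mod_cast this
    set x := (k:ℝ); set y := ((n-k:ℕ):ℝ)
    rw [hxy, div_add_div _ _ (by positivity) (by positivity), div_mul_div_comm,
      div_le_div_iff₀ (by positivity) (by positivity)]
    nlinarith [sq_nonneg (x-y), sq_nonneg (x*y), sq_nonneg (x+y)]
  calc ∑ k ∈ Finset.Ico 1 n, (1:ℝ)/((k:ℝ)^2 * ((n-k : ℕ):ℝ)^2)
      ≤ ∑ k ∈ Finset.Ico 1 n, 2/(n:ℝ)^2 * (1/(k:ℝ)^2 + 1/((n-k:ℕ):ℝ)^2) :=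
        Finset.sum_le_sum step
    _ = 2/(n:ℝ)^2 * ((∑ k ∈ Finset.Ico 1 n, (1:ℝ)/(k:ℝ)^2)
          + ∑ k ∈ Finset.Ico 1 n, (1:ℝ)/((n-k:ℕ):ℝ)^2) := by
        rw [← Finset.mul_sum, Finset.sum_add_distrib]
    _ ≤ 2/(n:ℝ)^2 * (2 + 2) := by
        have := basel n; have := basel_reflect n
        have h2 : (0:ℝ) ≤ 2/(n:ℝ)^2 := by positivity
        apply mul_le_mul_of_nonneg_left _ h2
        linarith
    _ = 8/(n:ℝ)^2 := by ring



/-- If `(a_n)` is positive with `a_n ≤ a_1 + η ∑_{k=1}^{n-1} C(n,k) a_{n-k} a_k` for `n ≥ 2`,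
then there exists `r* > 0` (depending only on `a_1` and `η`) with
`a_n ≤ n!/(2 η r*^n)` for all `n ≥ 2`. -/
theorem moment_recursion_bound (a : ℕ → ℝ) (η : ℝ) (hη : 0 < η)
    (ha : ∀ n, 1 ≤ n → 0 < a n)
    (hrec : ∀ n, 2 ≤ n →
      a n ≤ a 1 + η * ∑ k ∈ Finset.Ico 1 n, (n.choose k : ℝ) * a (n - k) * a k) :
    ∃ r : ℝ, 0 < r ∧ ∀ n, 2 ≤ n →
      a n ≤ (n.factorial : ℝ) / (2 * η * r ^ n) := by
  set M : ℝ := max 4 (16 * η * a 1) with hMdef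
  have hM4 : (4:ℝ) ≤ M := le_max_left _ _
  have hMa : 16 * η * a 1 ≤ M := le_max_right _ _
  have hM1 : (1:ℝ) ≤ M := by linarith
  have hMpos : (0:ℝ) < M := by linarith
  have ha1 : 0 < a 1 := ha 1 le_rfl
  -- main claim by strong induction
  have claim : ∀ n, 1 ≤ n → a n ≤ (n.factorial : ℝ) * M ^ n / (16 * η * (n:ℝ)^2) := by
    intro n
    induction n using Nat.strong_induction_on with
    | _ n ih =>
      intro hn
      rcases eq_or_lt_of_le hn with h1 | h2
      · -- n = 1
        rw [← h1]
        simp only [Nat.factorial_one, Nat.cast_one, pow_one, one_mul, one_pow]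
        rw [le_div_iff₀ (by positivity)]
        nlinarith
      · -- n ≥ 2
        have hn2 : 2 ≤ n := h2
        have hnp : (0:ℝ) < (n:ℝ) := by positivity
        have hterm : ∀ k ∈ Finset.Ico 1 n,
            (n.choose k : ℝ) * a (n - k) * a k ≤
              (n.factorial : ℝ) * M ^ n / (256 * η^2) * (1/((k:ℝ)^2 * ((n-k:ℕ):ℝ)^2)) := by
          intro k hk
          simp only [Finset.mem_Ico] at hk
          have hk1 : 1 ≤ k := hk.1
          have hkn : k < n := hk.2
          have hnk1 : 1 ≤ n - k := by omega
          have hnkn : n - k < n := by omega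
          have hA := ih (n - k) hnkn hnk1
          have hB := ih k hkn hk1
          have hApos := ha (n-k) hnk1
          have hBpos := ha k hk1
          have hchoose : (0:ℝ) ≤ (n.choose k : ℝ) := by positivity
          have step1 : (n.choose k : ℝ) * a (n - k) * a k ≤
              (n.choose k : ℝ) * ((((n-k):ℕ).factorial : ℝ) * M ^ (n-k) / (16 * η * ((n-k:ℕ):ℝ)^2))
                * ((k.factorial : ℝ) * M ^ k / (16 * η * (k:ℝ)^2)) := by
            apply mul_le_mul
            · exact mul_le_mul_of_nonneg_left hA hchoose
            · exact hB
            · linarith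
            · positivity
          refine step1.trans (le_of_eq ?_)
          have hfac : (n.choose k : ℝ) * (k.factorial : ℝ) * (((n-k):ℕ).factorial : ℝ)
              = (n.factorial : ℝ) := by
            exact_mod_cast Nat.choose_mul_factorial_mul_factorial (le_of_lt hkn)
          have hMpow : M ^ (n-k) * M ^ k = M ^ n := by
            rw [← pow_add]; congr 1; omega
          have hknr : ((n-k:ℕ):ℝ) ≠ 0 := by
            have : (0:ℕ) < n - k := hnk1
            positivity
          have hkr : ((k:ℕ):ℝ) ≠ 0 := by positivity
          calc (n.choose k : ℝ) * ((((n-k):ℕ).factorial : ℝ) * M ^ (n-k) / (16 * η * ((n-k:ℕ):ℝ)^2))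
                * ((k.factorial : ℝ) * M ^ k / (16 * η * (k:ℝ)^2))
              = ((n.choose k : ℝ) * (k.factorial : ℝ) * (((n-k):ℕ).factorial : ℝ))
                  * (M ^ (n-k) * M ^ k) / (256 * η^2) * (1/((k:ℝ)^2 * ((n-k:ℕ):ℝ)^2)) := by
                field_simp
                ring
            _ = (n.factorial : ℝ) * M ^ n / (256 * η^2) * (1/((k:ℝ)^2 * ((n-k:ℕ):ℝ)^2)) := by
                rw [hfac, hMpow]
        have hsum : ∑ k ∈ Finset.Ico 1 n, (n.choose k : ℝ) * a (n - k) * a k ≤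
            (n.factorial : ℝ) * M ^ n / (256 * η^2) * (8/(n:ℝ)^2) := by
          calc ∑ k ∈ Finset.Ico 1 n, (n.choose k : ℝ) * a (n - k) * a k
              ≤ ∑ k ∈ Finset.Ico 1 n,
                  (n.factorial : ℝ) * M ^ n / (256 * η^2) * (1/((k:ℝ)^2 * ((n-k:ℕ):ℝ)^2)) :=
                Finset.sum_le_sum hterm
            _ = (n.factorial : ℝ) * M ^ n / (256 * η^2) *
                  ∑ k ∈ Finset.Ico 1 n, (1:ℝ)/((k:ℝ)^2 * ((n-k:ℕ):ℝ)^2) := by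
                rw [Finset.mul_sum]
            _ ≤ (n.factorial : ℝ) * M ^ n / (256 * η^2) * (8/(n:ℝ)^2) := by
                apply mul_le_mul_of_nonneg_left (conv_bound n hn2) (by positivity)
        have ha1small : a 1 ≤ (n.factorial : ℝ) * M ^ n / (32 * η * (n:ℝ)^2) := by
          rw [le_div_iff₀ (by positivity)]
          have hf : ((n:ℝ))^2 ≤ 2 * (n.factorial : ℝ) := by
            exact_mod_cast sq_le_two_factorial n hn2
          have hMn : 64 * η * a 1 ≤ M ^ n := by
            calc 64 * η * a 1 ≤ 4 * M := by nlinarith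
              _ ≤ M * M := by nlinarith
              _ ≤ M ^ n := by
                calc M * M = M ^ 2 := by ring
                  _ ≤ M ^ n := pow_le_pow_right₀ hM1 hn2
          have := mul_le_mul hf hMn (by positivity) (by positivity)
          nlinarith
        have : a n ≤ a 1 + η * ((n.factorial : ℝ) * M ^ n / (256 * η^2) * (8/(n:ℝ)^2)) :=
          (hrec n hn2).trans (by nlinarith [hsum])
        have heq : η * ((n.factorial : ℝ) * M ^ n / (256 * η^2) * (8/(n:ℝ)^2))
            = (n.factorial : ℝ) * M ^ n / (32 * η * (n:ℝ)^2) := by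
          field_simp
          ring
        rw [heq] at this
        have h2eq : (n.factorial : ℝ) * M ^ n / (16 * η * (n:ℝ)^2)
            = 2 * ((n.factorial : ℝ) * M ^ n / (32 * η * (n:ℝ)^2)) := by
          field_simp
          ring
        rw [h2eq]
        linarith
  refine ⟨1/M, by positivity, fun n hn => ?_⟩
  have h := claim n (by omega)
  have hrn : (2 * η * (1/M) ^ n) = 2 * η / M ^ n := by
    rw [one_div, inv_pow]; ring
  rw [hrn]
  have hfin : (n.factorial : ℝ) / (2 * η / M ^ n) = (n.factorial : ℝ) * M ^ n / (2*η) := by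
    field_simp
  rw [hfin]
  refine h.trans ?_
  have hnp : (0:ℝ) < (n:ℝ) := by positivity
  apply div_le_div_of_nonneg_left (by positivity) (by positivity)
  have h2n : (2:ℝ) ≤ (n:ℝ) := by exact_mod_cast hn
  have h4 : (4:ℝ) ≤ (n:ℝ)^2 := by nlinarith
  nlinarith [mul_le_mul_of_nonneg_left h4 hη.le]
end

section
/- Define b_0 = 0, b_1 = a_1 > 0, and for n ≥ 2, b_n = a_1/n! + η ∑_{k=1}^{n-1} b_{n-k} b_k, with η > 0. Then for every N ≥ 2 the polynomial B^N(u) = ∑_{k=0}^N b_k u^k satisfies the strict inequality B^N(u) < a_1(e^u − 1) + η B^N(u)^2 for all u > 0. -/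
open Finset

/-- Auxiliary: the Cauchy-product lower bound for squares of nonnegative sums. -/
lemma aux_sq_lower (N : ℕ) (f : ℕ → ℝ) (hf : ∀ k, 0 ≤ f k) :
    ∑ n ∈ Finset.Ico 2 (N + 1), ∑ k ∈ Finset.Ico 1 n, f (n - k) * f k ≤
      (∑ k ∈ Finset.range (N + 1), f k) ^ 2 := by
  classical
  set S : Finset (ℕ × ℕ) :=
    (Finset.Ico 2 (N + 1)).biUnion (fun n => (Finset.Ico 1 n).image (fun k => (n - k, k)))
  have hsum : ∑ n ∈ Finset.Ico 2 (N + 1), ∑ k ∈ Finset.Ico 1 n, f (n - k) * f k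
      = ∑ p ∈ S, f p.1 * f p.2 := by
    rw [Finset.sum_biUnion]
    · refine Finset.sum_congr rfl fun n hn => ?_
      rw [Finset.sum_image]
      intro x hx y hy hxy
      exact (Prod.mk.injEq _ _ _ _ ▸ hxy).2
    · intro n hn m hm hnm
      simp only [Finset.disjoint_left, Finset.mem_image]
      rintro p ⟨k, hk, rfl⟩ ⟨l, hl, hpl⟩
      simp only [Finset.mem_Ico] at hk hl hn hm
      apply hnm
      have h1 : l = k := (Prod.mk.injEq _ _ _ _ ▸ hpl).2
      have h2 : m - l = n - k := (Prod.mk.injEq _ _ _ _ ▸ hpl).1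
      omega
  rw [hsum, sq, Finset.sum_mul_sum, ← Finset.sum_product']
  apply Finset.sum_le_sum_of_subset_of_nonneg
  · intro p hp
    simp only [S, Finset.mem_biUnion, Finset.mem_image, Finset.mem_Ico] at hp
    obtain ⟨n, hn, k, hk, rfl⟩ := hp
    simp only [Finset.mem_product, Finset.mem_range]
    omega
  · intro p _ _
    exact mul_nonneg (hf _) (hf _)

/-- With `b_0 = 0`, `b_1 = a_1 > 0` and `b_n = a_1/n! + η ∑_{k=1}^{n-1} b_{n-k} b_k` for `n ≥ 2`
(`η > 0`), for every `N ≥ 2` the polynomial `B^N(u) = ∑_{k=0}^N b_k u^k` satisfies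
`B^N(u) < a_1 (e^u - 1) + η B^N(u)^2` for all `u > 0`. -/
theorem poly_quadratic_inequality (a₁ η : ℝ) (ha : 0 < a₁) (hη : 0 < η)
    (b : ℕ → ℝ) (hb0 : b 0 = 0) (hb1 : b 1 = a₁)
    (hbn : ∀ n, 2 ≤ n →
      b n = a₁ / (n.factorial : ℝ) + η * ∑ k ∈ Finset.Ico 1 n, b (n - k) * b k) :
    ∀ N, 2 ≤ N → ∀ u : ℝ, 0 < u →
      (∑ k ∈ Finset.range (N + 1), b k * u ^ k) <
        a₁ * (Real.exp u - 1) + η * (∑ k ∈ Finset.range (N + 1), b k * u ^ k) ^ 2 := by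
  -- nonnegativity of b
  have hbnn : ∀ n, 0 ≤ b n := by
    intro n
    induction n using Nat.strong_induction_on with
    | _ n ih =>
      match n, ih with
      | 0, _ => simp [hb0]
      | 1, _ => simp [hb1, ha.le]
      | (m+2), ih =>
        rw [hbn (m+2) (by omega)]
        have h1 : 0 ≤ a₁ / ((m+2).factorial : ℝ) :=
          div_nonneg ha.le (by positivity)
        have h2 : 0 ≤ ∑ k ∈ Finset.Ico 1 (m+2), b (m + 2 - k) * b k := by
          apply Finset.sum_nonneg
          intro k hk
          simp only [Finset.mem_Ico] at hk
          exact mul_nonneg (ih _ (by omega)) (ih _ (by omega))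
        linarith [mul_nonneg hη.le h2]
  intro N hN u hu
  set f : ℕ → ℝ := fun k => b k * u ^ k with hf
  have hfnn : ∀ k, 0 ≤ f k := fun k => mul_nonneg (hbnn k) (by positivity)
  -- each term for n ≥ 2
  have key : ∀ n ∈ Finset.Ico 2 (N + 1),
      f n = a₁ * (u ^ n / (n.factorial : ℝ)) + η * ∑ k ∈ Finset.Ico 1 n, f (n - k) * f k := by
    intro n hn
    simp only [Finset.mem_Ico] at hn
    have : ∑ k ∈ Finset.Ico 1 n, f (n - k) * f k
        = (∑ k ∈ Finset.Ico 1 n, b (n - k) * b k) * u ^ n := by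
      rw [Finset.sum_mul]
      refine Finset.sum_congr rfl fun k hk => ?_
      simp only [Finset.mem_Ico] at hk
      have hpow : u ^ (n - k) * u ^ k = u ^ n := by
        rw [← pow_add]; congr 1; omega
      simp only [hf]
      rw [show b (n - k) * u ^ (n - k) * (b k * u ^ k)
          = b (n - k) * b k * (u ^ (n - k) * u ^ k) from by ring, hpow]
    simp only [hf]
    rw [hbn n (by omega), add_mul, this]
    ring
  -- split the sum
  have hsplit : ∑ k ∈ Finset.range (N + 1), f k
      = (∑ n ∈ Finset.Ico 1 (N + 1), a₁ * (u ^ n / (n.factorial : ℝ)))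
        + η * ∑ n ∈ Finset.Ico 2 (N + 1), ∑ k ∈ Finset.Ico 1 n, f (n - k) * f k := by
    rw [Finset.range_eq_Ico,
      ← Finset.sum_Ico_consecutive f (by omega : 0 ≤ 2) (by omega : 2 ≤ N + 1),
      ← Finset.sum_Ico_consecutive (fun n => a₁ * (u ^ n / (n.factorial : ℝ)))
        (by omega : 1 ≤ 2) (by omega : 2 ≤ N + 1)]
    have e0 : ∑ k ∈ Finset.Ico 0 2, f k = a₁ * u := by
      rw [← Finset.range_eq_Ico, Finset.sum_range_succ, Finset.sum_range_one]
      simp [hf, hb0, hb1]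
    have e1 : ∑ n ∈ Finset.Ico 1 2, a₁ * (u ^ n / (n.factorial : ℝ)) = a₁ * u := by
      simp [Finset.sum_Ico_eq_sum_range]
    rw [e0, e1, Finset.sum_congr rfl key, Finset.sum_add_distrib, Finset.mul_sum]
    ring
  -- exponential bound
  have hexp : ∑ n ∈ Finset.Ico 1 (N + 1), a₁ * (u ^ n / (n.factorial : ℝ))
      < a₁ * (Real.exp u - 1) := by
    rw [← Finset.mul_sum]
    apply mul_lt_mul_of_pos_left _ ha
    have h1 : ∑ n ∈ Finset.Ico 1 (N + 1), u ^ n / (n.factorial : ℝ)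
        = (∑ n ∈ Finset.range (N + 1), u ^ n / (n.factorial : ℝ)) - 1 := by
      rw [Finset.range_eq_Ico,
        ← Finset.sum_Ico_consecutive (fun n => u ^ n / (n.factorial : ℝ))
          (by omega : 0 ≤ 1) (by omega : 1 ≤ N + 1)]
      simp
    rw [h1, sub_lt_sub_iff_right]
    have h2 : ∑ n ∈ Finset.range (N + 2), u ^ n / (n.factorial : ℝ) ≤ Real.exp u :=
      Real.sum_le_exp_of_nonneg hu.le (N + 2)
    have h3 : 0 < u ^ (N + 1) / ((N + 1).factorial : ℝ) := by positivity
    rw [Finset.sum_range_succ] at h2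
    linarith
  -- quadratic bound
  have hsq : ∑ n ∈ Finset.Ico 2 (N + 1), ∑ k ∈ Finset.Ico 1 n, f (n - k) * f k
      ≤ (∑ k ∈ Finset.range (N + 1), f k) ^ 2 := aux_sq_lower N f hfnn
  have hfin : (∑ k ∈ Finset.range (N + 1), f k) <
      a₁ * (Real.exp u - 1) + η * (∑ k ∈ Finset.range (N + 1), f k) ^ 2 := by
    have h4 := mul_le_mul_of_nonneg_left hsq hη.le
    rw [hsplit] at h4 ⊢
    linarith
  exact hfin
end

section
/- Let a_n be positive with a_1 = b_1 and a_n ≤ a_1 + η ∑_{k=1}^{n-1} C(n,k) a_{n-k} a_k, and let b_n be defined by b_1 = a_1, b_n = a_1/n! + η ∑_{k=1}^{n-1} b_{n-k} b_k for n ≥ 2. Then a_n ≤ b_n · n! for all n ≥ 1. -/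
/-! Strong induction on `n`: since `C(n,k) (n-k)! k! = n!`, the bounds `a m ≤ b m * m!` for
`m < n` turn the binomial convolution in the recursion for `a n` into `n!` times the
convolution in the recursion for `b n`. -/

open Finset Nat

lemma sum_choose_mul_le_factorial_mul_sum {a b : ℕ → ℝ} {n : ℕ} (ha : ∀ m, 1 ≤ m → 0 ≤ a m)
    (hab : ∀ m, 1 ≤ m → m < n → a m ≤ b m * m !) :
    ∑ k ∈ Ico 1 n, (n.choose k : ℝ) * a (n - k) * a k ≤
      n ! * ∑ k ∈ Ico 1 n, b (n - k) * b k := by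
  rw [mul_sum]
  refine sum_le_sum fun k hk => ?_
  obtain ⟨hk1, hkn⟩ := mem_Ico.mp hk
  have hnk : 1 ≤ n - k := by omega
  calc (n.choose k : ℝ) * a (n - k) * a k
      ≤ n.choose k * (b (n - k) * (n - k)!) * (b k * k !) := by
        have hb_nonneg : 0 ≤ b (n - k) * (n - k)! :=
          (ha _ hnk).trans (hab _ hnk (by omega))
        gcongr
        exacts [ha _ hk1, hab _ hnk (by omega), hab _ hk1 hkn]
    _ = n ! * (b (n - k) * b k) := by
        rw [← choose_mul_factorial_mul_factorial hkn.le]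
        push_cast
        ring

theorem a_le_b_mul_factorial_general (a b : ℕ → ℝ) (η : ℝ) (hη : 0 < η)
    (hapos : ∀ n, 1 ≤ n → 0 < a n)
    (harec : ∀ n, 2 ≤ n →
      a n ≤ a 1 + η * ∑ k ∈ Finset.Ico 1 n, (n.choose k : ℝ) * a (n - k) * a k)
    (hb1 : b 1 = a 1)
    (hbrec : ∀ n, 2 ≤ n →
      b n = a 1 / (n.factorial : ℝ) + η * ∑ k ∈ Finset.Ico 1 n, b (n - k) * b k) :
    ∀ n, 1 ≤ n → a n ≤ b n * (n.factorial : ℝ) := by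
  intro n
  induction n using Nat.strong_induction_on with
  | _ n ih =>
    intro hn
    obtain rfl | hn2 : n = 1 ∨ 2 ≤ n := by omega
    · simp [hb1]
    have hsum := sum_choose_mul_le_factorial_mul_sum (fun m hm => (hapos m hm).le)
      (fun m hm hmn => ih m hmn hm)
    calc a n ≤ a 1 + η * ∑ k ∈ Ico 1 n, (n.choose k : ℝ) * a (n - k) * a k := harec n hn2
      _ ≤ a 1 + η * (n ! * ∑ k ∈ Ico 1 n, b (n - k) * b k) := by gcongr
      _ = b n * n ! := by
        rw [hbrec n hn2]
        field_simp

/-- If `a_n > 0` satisfies `a_1 = b_1` and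
`a_n ≤ a_1 + η ∑_{k=1}^{n-1} C(n,k) a_{n-k} a_k`, and `b_n` is defined by `b_1 = a_1`,
`b_n = a_1/n! + η ∑_{k=1}^{n-1} b_{n-k} b_k` for `n ≥ 2`,
then `a_n ≤ b_n · n!` for all `n ≥ 1`. -/
theorem a_le_b_mul_factorial (a b : ℕ → ℝ) (η : ℝ) (hη : 0 < η)
    (ha1 : 0 < a 1)
    (hapos : ∀ n, 1 ≤ n → 0 < a n)
    (hab : a 1 = b 1)
    (harec : ∀ n, 2 ≤ n →
      a n ≤ a 1 + η * ∑ k ∈ Finset.Ico 1 n, (n.choose k : ℝ) * a (n - k) * a k)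
    (hb1 : b 1 = a 1)
    (hbrec : ∀ n, 2 ≤ n →
      b n = a 1 / (n.factorial : ℝ) + η * ∑ k ∈ Finset.Ico 1 n, b (n - k) * b k) :
    ∀ n, 1 ≤ n → a n ≤ b n * (n.factorial : ℝ) :=
  a_le_b_mul_factorial_general a b η hη hapos harec hb1 hbrec
end

section
/- Let v_n: ℝ₊ × ℝ → ℝ₊ for n ≥ 1 satisfy sup_{t,x} v_1(t,x) ≤ C₁ with C₁ ≥ 1, and for n ≥ 2, v_n(t,x) ≤ C₁/(t+1)^{n-1} + b* (n-1) · (max_{1≤k≤n-1} sup C(n,k) v_k v_{n-k}) · ∫₀ᵗ C₁ (t−s+1)^{n-2}/(t+1)^{n-1} ds. If inductively C_k := sup v_k ≤ k! D^{2k−1} with D = C₁ max(b*,1) for all k < n, then C_n ≤ n! D^{2n−1}. -/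
/-- Inductive step of the critical-case moment bound: if `sup v_1 ≤ C₁` with `C₁ ≥ 1`,
the lower-order suprema satisfy `C_k ≤ k! D^{2k-1}` with `D = C₁ max(b*,1)`, and
`v_n(t,x) ≤ C₁/(t+1)^{n-1} + b*(n-1) M ∫₀ᵗ C₁ (t-s+1)^{n-2}/(t+1)^{n-1} ds`
where `M` is the maximum over `1 ≤ k ≤ n-1` of `C(n,k) C_k C_{n-k}`,
then `v_n ≤ n! D^{2n-1}`. -/
theorem critical_moment_inductive_step
    (v : ℕ → ℝ → ℝ → ℝ) (C₁ bstar D : ℝ) (n : ℕ) (hn : 2 ≤ n)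
    (hC₁ : 1 ≤ C₁) (hb : 0 < bstar) (hD : D = C₁ * max bstar 1)
    (hvnonneg : ∀ m t x, 0 ≤ v m t x)
    (hv1 : ∀ t x, 0 ≤ t → v 1 t x ≤ C₁)
    (C : ℕ → ℝ)
    (hCsup : ∀ k, 1 ≤ k → k < n → ∀ t x, 0 ≤ t → v k t x ≤ C k)
    (hCbound : ∀ k, 1 ≤ k → k < n → C k ≤ (k.factorial : ℝ) * D ^ (2 * k - 1))
    (M : ℝ)
    (hM : M = (Finset.Ico 1 n).sup' (Finset.nonempty_Ico.mpr (by omega))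
      (fun k => (n.choose k : ℝ) * C k * C (n - k)))
    (hrec : ∀ t x, 0 ≤ t →
      v n t x ≤ C₁ / (t + 1) ^ (n - 1) +
        bstar * (n - 1 : ℝ) * M *
          ∫ s in (0 : ℝ)..t, C₁ * (t - s + 1) ^ (n - 2) / (t + 1) ^ (n - 1)) :
    ∀ t x, 0 ≤ t → v n t x ≤ (n.factorial : ℝ) * D ^ (2 * n - 1) := by
  intro t x ht
  have hD1 : (1:ℝ) ≤ D := by
    rw [hD]
    have h1 : (1:ℝ) ≤ max bstar 1 := le_max_right _ _
    nlinarith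
  have hDpos : (0:ℝ) < D := lt_of_lt_of_le one_pos hD1
  have hCk0 : ∀ k, 1 ≤ k → k < n → 0 ≤ C k := fun k h1 h2 =>
    le_trans (hvnonneg k 0 0) (hCsup k h1 h2 0 0 le_rfl)
  have hfac1 : (1:ℝ) ≤ (n.factorial : ℝ) := by
    exact_mod_cast Nat.one_le_iff_ne_zero.mpr (Nat.factorial_ne_zero n)
  set N : ℝ := (n.factorial : ℝ) * D ^ (2*n - 1) with hN
  -- bound M
  have hMle : M ≤ (n.factorial : ℝ) * D ^ (2*n - 2) := by
    rw [hM]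
    apply Finset.sup'_le
    intro k hk
    rw [Finset.mem_Ico] at hk
    obtain ⟨hk1, hk2⟩ := hk
    have h1 : C k ≤ (k.factorial : ℝ) * D ^ (2*k - 1) := hCbound k hk1 hk2
    have hnk1 : 1 ≤ n - k := by omega
    have hnk2 : n - k < n := by omega
    have h2 : C (n-k) ≤ ((n-k).factorial : ℝ) * D ^ (2*(n-k) - 1) := hCbound _ hnk1 hnk2
    have hck0 := hCk0 k hk1 hk2
    have hcnk0 := hCk0 (n-k) hnk1 hnk2
    calc (n.choose k : ℝ) * C k * C (n-k)
        ≤ (n.choose k : ℝ) * ((k.factorial : ℝ) * D ^ (2*k-1)) *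
            (((n-k).factorial : ℝ) * D ^ (2*(n-k)-1)) := by
          apply mul_le_mul _ h2 hcnk0 (by positivity)
          exact mul_le_mul le_rfl h1 hck0 (Nat.cast_nonneg _)
      _ = ((n.choose k : ℝ) * k.factorial * (n-k).factorial) *
            (D ^ (2*k-1) * D ^ (2*(n-k)-1)) := by ring
      _ = (n.factorial : ℝ) * D ^ (2*n-2) := by
          rw [← pow_add]
          congr 1
          · rw [← Nat.cast_mul, ← Nat.cast_mul,
              Nat.choose_mul_factorial_mul_factorial (le_of_lt hk2)]
          · congr 1; omega
  have hM0 : 0 ≤ M := by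
    rw [hM]
    have h1 : (1:ℕ) ∈ Finset.Ico 1 n := Finset.mem_Ico.mpr ⟨le_rfl, by omega⟩
    refine le_trans ?_ (Finset.le_sup' _ h1)
    have ha := hCk0 1 le_rfl (by omega)
    have hb' := hCk0 (n-1) (by omega) (by omega)
    have hc : (0:ℝ) ≤ (n.choose 1 : ℝ) := Nat.cast_nonneg _
    positivity
  -- key bounds
  have hCN : C₁ ≤ N := by
    have h1 : C₁ ≤ D := by
      rw [hD]; nlinarith [le_max_right bstar (1:ℝ)]
    have h2 : D ≤ D ^ (2*n - 1) := by
      calc D = D ^ 1 := (pow_one D).symm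
        _ ≤ D ^ (2*n - 1) := pow_le_pow_right₀ hD1 (by omega)
    nlinarith
  have hbMN : bstar * M * C₁ ≤ N := by
    have h1 : bstar * C₁ ≤ D := by
      rw [hD]
      have : bstar ≤ max bstar 1 := le_max_left _ _
      nlinarith
    have h2 : bstar * M * C₁ ≤ D * M := by nlinarith
    have h3 : D * M ≤ D * ((n.factorial : ℝ) * D ^ (2*n - 2)) :=
      mul_le_mul_of_nonneg_left hMle (le_of_lt hDpos)
    have h4 : D * ((n.factorial : ℝ) * D ^ (2*n - 2)) = N := by
      rw [hN]
      have : 2*n - 1 = (2*n - 2) + 1 := by omega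
      rw [this, pow_succ]; ring
    linarith
  -- integral computation
  set P : ℝ := (t+1)^(n-1) with hPdef
  have hP1 : (1:ℝ) ≤ P := one_le_pow₀ (by linarith)
  have hPpos : (0:ℝ) < P := lt_of_lt_of_le one_pos hP1
  have hn1 : (1:ℝ) ≤ (n:ℝ) - 1 := by
    have : (2:ℝ) ≤ (n:ℝ) := by exact_mod_cast hn
    linarith
  have hint : (∫ s in (0:ℝ)..t, C₁ * (t - s + 1) ^ (n - 2) / (t + 1) ^ (n - 1))
      = C₁ / P * ((P - 1) / ((n:ℝ) - 1)) := by
    have hcongr : (∫ s in (0:ℝ)..t, C₁ * (t - s + 1) ^ (n - 2) / (t + 1) ^ (n - 1))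
        = ∫ s in (0:ℝ)..t, (C₁ / P) * ((t+1) - s)^(n-2) := by
      apply intervalIntegral.integral_congr
      intro s _
      rw [hPdef]
      ring
    rw [hcongr, intervalIntegral.integral_const_mul,
      intervalIntegral.integral_comp_sub_left (fun u => u ^ (n-2)) (t+1)]
    simp only [sub_zero, add_sub_cancel_left]
    rw [integral_pow]
    have he : n - 2 + 1 = n - 1 := by omega
    have hc : ((n - 2 : ℕ) : ℝ) + 1 = (n:ℝ) - 1 := by
      have : ((n - 2 : ℕ) : ℝ) = (n:ℝ) - 2 := by
        push_cast [Nat.cast_sub hn]; ring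
      rw [this]; ring
    rw [he, hc, hPdef, one_pow]
  have hrec' := hrec t x ht
  rw [hint] at hrec'
  have hfinal : C₁ / P + bstar * ((n:ℝ) - 1) * M * (C₁ / P * ((P - 1) / ((n:ℝ) - 1))) ≤ N := by
    have hne : (n:ℝ) - 1 ≠ 0 := by linarith
    have heq : C₁ / P + bstar * ((n:ℝ) - 1) * M * (C₁ / P * ((P - 1) / ((n:ℝ) - 1)))
        = (C₁ + bstar * M * C₁ * (P - 1)) / P := by
      field_simp
    rw [heq, div_le_iff₀ hPpos]
    nlinarith [mul_nonneg (sub_nonneg.mpr hbMN) (sub_nonneg.mpr hP1)]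
  calc v n t x ≤ _ := hrec'
    _ ≤ N := by
        have : ((n:ℝ) - 1 : ℝ) = ((n:ℝ) - 1) := rfl
        exact_mod_cast hfinal
end

section
/- Let (P_t)_{t≥0} be a semigroup of positive linear operators on bounded measurable functions with P_t 1 ≤ e^{At} for some A, and suppose there exist a bounded positive function Θ₀, a finite positive measure μ₀ with ∫Θ₀ dμ₀ = 1, and constants λ₁ > λ₀, H > 0 such that ‖e^{λ₀ t} P_t g − Θ₀ ∫ g dμ₀‖_∞ ≤ H ‖g‖_∞ e^{−(λ₁−λ₀)t} for all bounded g. Then for every bounded measurable φ and x with Θ₀(x) > 0, lim_{t→∞} P_t φ(x) / P_t 1(x) = ∫ φ dμ₀ / ∫ 1 dμ₀. -/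
open MeasureTheory Filter Real

/-
Applied to `φ` and to `1`, the spectral-gap estimate gives `e^{λ₀ t} P_t φ(x) → Θ₀(x) ∫ φ dμ₀`
and `e^{λ₀ t} P_t 1(x) → Θ₀(x) μ₀(ℝ)`. The second limit is nonzero, so the common factor
`e^{λ₀ t}` cancels in the ratio and `Θ₀(x)` cancels in the limit.
-/

lemma tendsto_of_abs_sub_le_mul_exp_neg {f : ℝ → ℝ} {L K c : ℝ} (hc : 0 < c)
    (h : ∀ t, 0 ≤ t → |f t - L| ≤ K * exp (-c * t)) :
    Tendsto f atTop (nhds L) := by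
  have hdecay : Tendsto (fun t => K * exp (-c * t)) atTop (nhds 0) := by
    simpa using (tendsto_exp_atBot.comp
      (tendsto_id.const_mul_atTop_of_neg (neg_neg_of_pos hc))).const_mul K
  rw [tendsto_iff_dist_tendsto_zero]
  refine squeeze_zero' (Eventually.of_forall fun _ => dist_nonneg) ?_ hdecay
  filter_upwards [eventually_ge_atTop 0] with t ht
  exact h t ht

lemma Filter.Tendsto.div_of_tendsto_mul {α 𝕜 : Type*} [Field 𝕜] [TopologicalSpace 𝕜]
    [ContinuousMul 𝕜] [ContinuousInv₀ 𝕜] {l : Filter α} {w u v : α → 𝕜} {a b c : 𝕜}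
    (hu : Tendsto (fun t => w t * u t) l (nhds (c * a)))
    (hv : Tendsto (fun t => w t * v t) l (nhds (c * b)))
    (hw : ∀ t, w t ≠ 0) (hc : c ≠ 0) (hb : b ≠ 0) :
    Tendsto (fun t => u t / v t) l (nhds (a / b)) := by
  have h := hu.div hv (mul_ne_zero hc hb)
  rw [mul_div_mul_left _ _ hc] at h
  exact h.congr fun t => mul_div_mul_left _ _ (hw t)

theorem ratio_limit_semigroup_general
    (P : ℝ → (ℝ → ℝ) → (ℝ → ℝ))
    (Θ₀ : ℝ → ℝ) (hΘpos : ∀ x, 0 < Θ₀ x)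
    (μ₀ : Measure ℝ) [IsFiniteMeasure μ₀] (hμ₀ : μ₀ ≠ 0)
    (lam₀ lam₁ H : ℝ) (hlam : lam₀ < lam₁)
    (hgap : ∀ g : ℝ → ℝ, Measurable g → ∀ Cg : ℝ, (∀ x, |g x| ≤ Cg) →
      ∀ t : ℝ, 0 ≤ t → ∀ x,
        |Real.exp (lam₀ * t) * P t g x - Θ₀ x * ∫ y, g y ∂μ₀| ≤
          H * Cg * Real.exp (-(lam₁ - lam₀) * t)) :
    ∀ φ : ℝ → ℝ, Measurable φ → (∃ C, ∀ x, |φ x| ≤ C) → ∀ x : ℝ,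
      Tendsto (fun t => P t φ x / P t (fun _ => 1) x) atTop
        (nhds ((∫ y, φ y ∂μ₀) / (μ₀ Set.univ).toReal)) := by
  intro φ hφ ⟨C, hC⟩ x
  have hc : 0 < lam₁ - lam₀ := sub_pos.2 hlam
  have hnum := tendsto_of_abs_sub_le_mul_exp_neg hc fun t ht => hgap φ hφ C hC t ht x
  have hden := tendsto_of_abs_sub_le_mul_exp_neg hc fun t ht =>
    hgap (fun _ => 1) measurable_const 1 (fun _ => by simp) t ht x
  have : NeZero μ₀ := ⟨hμ₀⟩
  have hmass : (μ₀ Set.univ).toReal ≠ 0 := measureReal_univ_ne_zero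
  rw [integral_const, smul_eq_mul, mul_one, measureReal_def] at hden
  exact hnum.div_of_tendsto_mul hden (fun _ => exp_ne_zero _) (hΘpos x).ne' hmass

/-- Ratio limit for a positive semigroup with a spectral gap: under the stated hypotheses,
`P_t φ(x) / P_t 1(x) → ∫ φ dμ₀ / μ₀(ℝ)` as `t → ∞`, at every `x` with `Θ₀(x) > 0`. -/
theorem ratio_limit_semigroup
    (P : ℝ → (ℝ → ℝ) → (ℝ → ℝ))
    (hsg : ∀ s t : ℝ, 0 ≤ s → 0 ≤ t → ∀ f : ℝ → ℝ, P (s + t) f = P s (P t f))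
    (hlin : ∀ t : ℝ, 0 ≤ t → ∀ (c : ℝ) (f g : ℝ → ℝ),
      P t (fun x => c * f x + g x) = fun x => c * P t f x + P t g x)
    (hpos : ∀ t : ℝ, 0 ≤ t → ∀ f : ℝ → ℝ, (∀ x, 0 ≤ f x) → ∀ x, 0 ≤ P t f x)
    (A : ℝ) (hP1 : ∀ t : ℝ, 0 ≤ t → ∀ x, P t (fun _ => 1) x ≤ Real.exp (A * t))
    (Θ₀ : ℝ → ℝ) (hΘpos : ∀ x, 0 < Θ₀ x) (hΘbdd : ∃ Cb, ∀ x, Θ₀ x ≤ Cb)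
    (μ₀ : Measure ℝ) [IsFiniteMeasure μ₀] (hμ₀ : μ₀ ≠ 0)
    (hΘint : ∫ y, Θ₀ y ∂μ₀ = 1)
    (lam₀ lam₁ H : ℝ) (hlam : lam₀ < lam₁) (hH : 0 < H)
    (hgap : ∀ g : ℝ → ℝ, Measurable g → ∀ Cg : ℝ, (∀ x, |g x| ≤ Cg) →
      ∀ t : ℝ, 0 ≤ t → ∀ x,
        |Real.exp (lam₀ * t) * P t g x - Θ₀ x * ∫ y, g y ∂μ₀| ≤
          H * Cg * Real.exp (-(lam₁ - lam₀) * t)) :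
    ∀ φ : ℝ → ℝ, Measurable φ → (∃ C, ∀ x, |φ x| ≤ C) → ∀ x : ℝ,
      Tendsto (fun t => P t φ x / P t (fun _ => 1) x) atTop
        (nhds ((∫ y, φ y ∂μ₀) / (μ₀ Set.univ).toReal)) :=
  ratio_limit_semigroup_general P Θ₀ hΘpos μ₀ hμ₀ lam₀ lam₁ H hlam hgap
end
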